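/- The pile-modification operator π_x is parallel-set preserving: for every x : Fin n → SignType of dimension p and every j with 0 ≤ j < p, the embedded source and target faces occupy the same parallel classes, i.e. {(x * y)⁻¹(0) | y ∈ ψ j p} = {(x * y)⁻¹(0) | y ∈ ω j p}. Consequently, if v is a j-section (a set of dimension-j sub-cubes of the n-cube containing exactly one element with zero-set S for each S ⊆ Fin n with card S = j) and {x * y | y ∈ ψ j p} ⊆ v, then (v \ {x * y | y ∈ ψ j p}) ∪ {x * y | y ∈ ω j p} is again a j-section. -/
import Mathlib


/-- The geometric realization of a sub-cube word `x : Fin n → SignType`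
as a face of the cube `[-1,1]^n ⊆ (Fin n → ℝ)`. -/
def geom {n : ℕ} (x : Fin n → SignType) : Set (Fin n → ℝ) :=
  {p | ∀ i, (x i = 0 → p i ∈ Set.Icc (-1 : ℝ) 1) ∧ (x i ≠ 0 → p i = (x i : ℝ))}

/-- The dimension of a sub-cube: the number of `0` letters. -/
def dim {n : ℕ} (x : Fin n → SignType) : ℕ :=
  (Finset.univ.filter fun i => x i = 0).card

/-- The zero-set of a word. -/
def zeroSet {n : ℕ} (x : Fin n → SignType) : Finset (Fin n) :=
  Finset.univ.filter fun i => x i = 0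

/-- Append the letter `s` at the end of a word (`λ`, `μ`, `ν` are `app (-1)`, `app 0`, `app 1`). -/
def app {n : ℕ} (s : SignType) (x : Fin n → SignType) : Fin (n + 1) → SignType :=
  Fin.snoc x s

/-- The source `k`-faces `ψ k n` of the `n`-cube. -/
def Psi : (k n : ℕ) → Finset (Fin n → SignType)
  | _, 0 => {fun i => i.elim0}
  | 0, _ + 1 => {fun _ => -1}
  | k + 1, n + 1 =>
    if n + 1 ≤ k + 1 then {fun _ => 0}
    else if Even (k + 1) then
      (Psi k n).image (app 0) ∪ (Psi (k + 1) n).image (app (-1))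
    else
      (Psi k n).image (app 0) ∪ (Psi (k + 1) n).image (app 1)

/-- The target `k`-faces `ω k n` of the `n`-cube. -/
def Omega : (k n : ℕ) → Finset (Fin n → SignType)
  | _, 0 => {fun i => i.elim0}
  | 0, _ + 1 => {fun _ => 1}
  | k + 1, n + 1 =>
    if n + 1 ≤ k + 1 then {fun _ => 0}
    else if Even (k + 1) then
      (Omega (k + 1) n).image (app 1) ∪ (Omega k n).image (app 0)
    else
      (Omega (k + 1) n).image (app (-1)) ∪ (Omega k n).image (app 0)

/-- The order isomorphism enumerating the zero positions of `x` in increasing order. -/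
noncomputable def zeroEnum {n p : ℕ} (x : Fin n → SignType) (h : dim x = p) :
    Fin p ≃o {i // i ∈ zeroSet x} :=
  (zeroSet x).orderIsoOfFin h

/-- The pairing `x * y`: place the sub-cube `y` of the `p`-cube into the `n`-cube
along the `p`-dimensional face `x`. -/
noncomputable def cubeMul {n p : ℕ} (x : Fin n → SignType) (h : dim x = p)
    (y : Fin p → SignType) : Fin n → SignType := fun i =>
  if hi : x i = 0 then y ((zeroEnum x h).symm ⟨i, by simp [zeroSet, hi]⟩) else x i

/-- A `j`-section of the `n`-cube: a set of `j`-dimensional sub-cubes containing exactly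
one element with zero-set `S` for each `S ⊆ Fin n` with `card S = j`. -/
def IsSection (n j : ℕ) (v : Set (Fin n → SignType)) : Prop :=
  (∀ z ∈ v, dim z = j) ∧
  ∀ S : Finset (Fin n), S.card = j → ∃! z, z ∈ v ∧ zeroSet z = S

lemma mem_zeroSet {n : ℕ} {x : Fin n → SignType} {i : Fin n} : i ∈ zeroSet x ↔ x i = 0 := by
  simp [zeroSet]

lemma app_injective {n : ℕ} (s : SignType) : Function.Injective (app (n := n) s) := by
  intro y y' hy
  funext i
  have := congrFun hy i.castSucc
  simpa [app, Fin.snoc_castSucc] using this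

lemma zeroSet_app_zero {n : ℕ} (y : Fin n → SignType) :
    zeroSet (app 0 y) = insert (Fin.last n) ((zeroSet y).image Fin.castSucc) := by
  ext i
  induction i using Fin.lastCases with
  | last => simp [mem_zeroSet, app, Fin.snoc_last]
  | cast i =>
    simp [mem_zeroSet, app, Fin.snoc_castSucc, (Fin.castSucc_lt_last i).ne, Fin.castSucc_inj]

lemma zeroSet_app_ne {n : ℕ} {s : SignType} (hs : s ≠ 0) (y : Fin n → SignType) :
    zeroSet (app s y) = (zeroSet y).image Fin.castSucc := by
  ext i
  induction i using Fin.lastCases with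
  | last =>
    simp only [mem_zeroSet, app, Fin.snoc_last, Finset.mem_image]
    simp [hs, fun a : Fin n => (Fin.castSucc_lt_last a).ne]
  | cast i =>
    simp [mem_zeroSet, app, Fin.snoc_castSucc, Fin.castSucc_inj]

lemma last_notMem_image_castSucc {n : ℕ} (S : Finset (Fin n)) :
    Fin.last n ∉ S.image Fin.castSucc := by
  simp [fun a : Fin n => (Fin.castSucc_lt_last a).ne]

lemma card_image_castSucc {n : ℕ} (S : Finset (Fin n)) :
    (S.image Fin.castSucc).card = S.card :=
  Finset.card_image_of_injective _ (Fin.castSucc_injective n)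

lemma family_spec (F : ∀ k n : ℕ, Finset (Fin n → SignType)) (c : SignType) (hc : c ≠ 0)
    (s : ℕ → SignType) (hs : ∀ k, s k ≠ 0)
    (h00 : ∀ k, F k 0 = {fun i => i.elim0})
    (h0 : ∀ n, F 0 (n + 1) = {fun _ => c})
    (htop : ∀ k n, n ≤ k → F (k + 1) (n + 1) = {fun _ => 0})
    (hrec : ∀ k n, k < n →
      F (k + 1) (n + 1) = (F k n).image (app 0) ∪ (F (k + 1) n).image (app (s k))) :
    ∀ p j, j ≤ p →
      (∀ y ∈ F j p, (zeroSet y).card = j) ∧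
      ∀ S : Finset (Fin p), S.card = j → ∃! y, y ∈ F j p ∧ zeroSet y = S := by
  intro p
  induction p with
  | zero =>
    intro j hj
    interval_cases j
    constructor
    · intro y _
      simp [zeroSet]
    · intro S hS
      refine ⟨fun i => i.elim0, ⟨by simp [h00], ?_⟩, fun y _ => Subsingleton.elim _ _⟩
      · apply Finset.eq_of_subset_of_card_le
        · intro i _; exact i.elim0
        · simp [hS]
  | succ n IH =>
    intro j hj
    match j with
    | 0 =>
      constructor
      · intro y hy
        rw [h0] at hy
        simp only [Finset.mem_singleton] at hy
        subst hy
        simp [zeroSet, hc]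
      · intro S hS
        rw [Finset.card_eq_zero] at hS
        subst hS
        refine ⟨fun _ => c, ⟨by simp [h0], by simp [zeroSet, hc]⟩, ?_⟩
        rintro y ⟨hy, hyz⟩
        rw [h0] at hy
        simpa using hy
    | k + 1 =>
      rcases le_or_gt n k with hnk | hkn
      · -- top case : j = n + 1
        have hk : k = n := le_antisymm (by omega) hnk
        subst hk
        constructor
        · intro y hy
          rw [htop _ _ le_rfl] at hy
          simp only [Finset.mem_singleton] at hy
          subst hy
          simp [zeroSet]
        · intro S hS
          have hSu : S = Finset.univ := Finset.eq_univ_of_card _ (by simpa using hS)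
          subst hSu
          refine ⟨fun _ => 0, ⟨by simp [htop _ _ le_rfl], by simp [zeroSet]⟩, ?_⟩
          rintro y ⟨hy, hyz⟩
          rw [htop _ _ le_rfl] at hy
          simpa using hy
      · -- recursive case : k < n
        have hrec' := hrec k n hkn
        obtain ⟨IH1k, IH2k⟩ := IH k (by omega)
        obtain ⟨IH1k1, IH2k1⟩ := IH (k + 1) (by omega)
        constructor
        · intro y hy
          rw [hrec', Finset.mem_union, Finset.mem_image, Finset.mem_image] at hy
          rcases hy with ⟨y₀, hy₀, rfl⟩ | ⟨y₁, hy₁, rfl⟩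
          · rw [zeroSet_app_zero, Finset.card_insert_of_notMem (last_notMem_image_castSucc _),
              card_image_castSucc, IH1k y₀ hy₀]
          · rw [zeroSet_app_ne (hs k), card_image_castSucc, IH1k1 y₁ hy₁]
        · intro S hS
          by_cases hL : Fin.last n ∈ S
          · -- S contains last : use app 0
            set S₀ : Finset (Fin n) := Finset.univ.filter (fun i => i.castSucc ∈ S) with hS₀def
            have hmap : S₀.image Fin.castSucc = S.erase (Fin.last n) := by
              ext i
              induction i using Fin.lastCases with
              | last =>
                simp only [Finset.mem_image, Finset.mem_erase]
                simp [fun a : Fin n => (Fin.castSucc_lt_last a).ne]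
              | cast i =>
                simp [hS₀def, Fin.castSucc_inj, (Fin.castSucc_lt_last i).ne]
            have hScard : S₀.card = k := by
              have := card_image_castSucc S₀
              rw [hmap, Finset.card_erase_of_mem hL, hS] at this
              omega
            obtain ⟨y₀, ⟨hy₀F, hy₀z⟩, hy₀u⟩ := IH2k S₀ hScard
            refine ⟨app 0 y₀, ⟨?_, ?_⟩, ?_⟩
            · rw [hrec']
              exact Finset.mem_union_left _ (Finset.mem_image_of_mem _ hy₀F)
            · rw [zeroSet_app_zero, hy₀z, hmap, Finset.insert_erase hL]
            · rintro y ⟨hyF, hyz⟩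
              rw [hrec', Finset.mem_union, Finset.mem_image, Finset.mem_image] at hyF
              rcases hyF with ⟨z₀, hz₀, rfl⟩ | ⟨z₁, hz₁, rfl⟩
              · have hz : zeroSet z₀ = S₀ := by
                  have h1 : insert (Fin.last n) ((zeroSet z₀).image Fin.castSucc) = S := by
                    rw [← zeroSet_app_zero, hyz]
                  have h2 : (zeroSet z₀).image Fin.castSucc = S.erase (Fin.last n) := by
                    rw [← h1, Finset.erase_insert (last_notMem_image_castSucc _)]
                  rw [← hmap] at h2
                  exact Finset.image_injective (Fin.castSucc_injective n) h2
                rw [hy₀u z₀ ⟨hz₀, hz⟩]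
              · exfalso
                rw [zeroSet_app_ne (hs k)] at hyz
                exact last_notMem_image_castSucc (zeroSet z₁) (hyz ▸ hL)
          · -- S does not contain last : use app (s k)
            set S₀ : Finset (Fin n) := Finset.univ.filter (fun i => i.castSucc ∈ S) with hS₀def
            have hmap : S₀.image Fin.castSucc = S := by
              ext i
              induction i using Fin.lastCases with
              | last =>
                simp only [Finset.mem_image]
                simp [hL, fun a : Fin n => (Fin.castSucc_lt_last a).ne]
              | cast i => simp [hS₀def, Fin.castSucc_inj]
            have hScard : S₀.card = k + 1 := by
              have := card_image_castSucc S₀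
              rw [hmap, hS] at this
              omega
            obtain ⟨y₁, ⟨hy₁F, hy₁z⟩, hy₁u⟩ := IH2k1 S₀ hScard
            refine ⟨app (s k) y₁, ⟨?_, ?_⟩, ?_⟩
            · rw [hrec']
              exact Finset.mem_union_right _ (Finset.mem_image_of_mem _ hy₁F)
            · rw [zeroSet_app_ne (hs k), hy₁z, hmap]
            · rintro y ⟨hyF, hyz⟩
              rw [hrec', Finset.mem_union, Finset.mem_image, Finset.mem_image] at hyF
              rcases hyF with ⟨z₀, hz₀, rfl⟩ | ⟨z₁, hz₁, rfl⟩
              · exfalso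
                rw [zeroSet_app_zero] at hyz
                exact hL (hyz ▸ Finset.mem_insert_self _ _)
              · have hz : zeroSet z₁ = S₀ := by
                  apply Finset.image_injective (Fin.castSucc_injective n)
                  rw [hmap, ← zeroSet_app_ne (hs k), hyz]
                rw [hy₁u z₁ ⟨hz₁, hz⟩]

lemma psi_spec : ∀ p j, j ≤ p →
    (∀ y ∈ Psi j p, (zeroSet y).card = j) ∧
    ∀ S : Finset (Fin p), S.card = j → ∃! y, y ∈ Psi j p ∧ zeroSet y = S := by
  apply family_spec Psi (-1) (by decide) (fun k => if Even (k + 1) then -1 else 1)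
  · intro k; split <;> decide
  · intro k; cases k <;> rfl
  · intro n; rfl
  · intro k n hnk; rw [Psi, if_pos (by omega)]
  · intro k n hkn
    rw [Psi, if_neg (by omega)]
    split <;> rfl

lemma omega_spec : ∀ p j, j ≤ p →
    (∀ y ∈ Omega j p, (zeroSet y).card = j) ∧
    ∀ S : Finset (Fin p), S.card = j → ∃! y, y ∈ Omega j p ∧ zeroSet y = S := by
  apply family_spec Omega 1 (by decide) (fun k => if Even (k + 1) then 1 else -1)
  · intro k; split <;> decide
  · intro k; cases k <;> rfl
  · intro n; rfl
  · intro k n hnk; rw [Omega, if_pos (by omega)]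
  · intro k n hkn
    rw [Omega, if_neg (by omega)]
    split <;> rw [Finset.union_comm]

/-- The embedding of coordinates of the `p`-cube into the zero positions of `x`. -/
noncomputable def emb {n p : ℕ} (x : Fin n → SignType) (h : dim x = p) : Fin p → Fin n :=
  fun a => ((zeroEnum x h a : {i // i ∈ zeroSet x}) : Fin n)

lemma emb_injective {n p : ℕ} (x : Fin n → SignType) (h : dim x = p) :
    Function.Injective (emb x h) := fun a b hab =>
  (zeroEnum x h).injective (Subtype.ext hab)

lemma x_emb {n p : ℕ} (x : Fin n → SignType) (h : dim x = p) (a : Fin p) :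
    x (emb x h a) = 0 := mem_zeroSet.1 (zeroEnum x h a).2

lemma cubeMul_emb {n p : ℕ} (x : Fin n → SignType) (h : dim x = p)
    (y : Fin p → SignType) (a : Fin p) : cubeMul x h y (emb x h a) = y a := by
  have hx := x_emb x h a
  simp only [cubeMul, dif_pos hx]
  have : (⟨emb x h a, by simp [zeroSet, hx]⟩ : {i // i ∈ zeroSet x}) = zeroEnum x h a :=
    Subtype.ext rfl
  rw [this, OrderIso.symm_apply_apply]

lemma cubeMul_zero_iff {n p : ℕ} (x : Fin n → SignType) (h : dim x = p)
    (y : Fin p → SignType) (i : Fin n) :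
    cubeMul x h y i = 0 ↔ ∃ a ∈ zeroSet y, emb x h a = i := by
  by_cases hi : x i = 0
  · simp only [cubeMul, dif_pos hi]
    set a₀ : Fin p := (zeroEnum x h).symm ⟨i, by simp [zeroSet, hi]⟩ with ha₀
    have hemb : emb x h a₀ = i := by
      rw [emb, ha₀, OrderIso.apply_symm_apply]
    constructor
    · intro hy
      exact ⟨a₀, mem_zeroSet.2 hy, hemb⟩
    · rintro ⟨a, ha, hai⟩
      have : a = a₀ := emb_injective x h (by rw [hai, hemb])
      subst this
      exact mem_zeroSet.1 ha
  · simp only [cubeMul, dif_neg hi]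
    constructor
    · intro hx; exact absurd hx hi
    · rintro ⟨a, _, rfl⟩
      exact absurd (x_emb x h a) hi

lemma zeroSet_cubeMul {n p : ℕ} (x : Fin n → SignType) (h : dim x = p)
    (y : Fin p → SignType) :
    zeroSet (cubeMul x h y) = (zeroSet y).image (emb x h) := by
  ext i
  rw [Finset.mem_image, mem_zeroSet, cubeMul_zero_iff x h y i]

lemma cubeMul_injective {n p : ℕ} (x : Fin n → SignType) (h : dim x = p) :
    Function.Injective (cubeMul x h) := by
  intro y y' hyy
  funext a
  have := congrFun hyy (emb x h a)
  rwa [cubeMul_emb, cubeMul_emb] at this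

lemma dim_eq_card_zeroSet {n : ℕ} (z : Fin n → SignType) : dim z = (zeroSet z).card := rfl

lemma preimage_zero_eq {n p : ℕ} (x : Fin n → SignType) (h : dim x = p)
    (y : Fin p → SignType) :
    cubeMul x h y ⁻¹' {0} = ↑(zeroSet (cubeMul x h y)) := by
  ext i
  simp [mem_zeroSet]

/-- The pile-modification operator `π_x` is parallel-set preserving: the embedded source
and target `j`-faces of `x` occupy the same parallel classes; consequently replacing the
embedded source faces by the embedded target faces within a `j`-section again yields a
`j`-section. -/
theorem stmt_13 {n p : ℕ} (x : Fin n → SignType) (h : dim x = p) (j : ℕ) (hj : j < p) :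
    ((fun y => cubeMul x h y ⁻¹' {0}) '' ↑(Psi j p) =
      (fun y => cubeMul x h y ⁻¹' {0}) '' ↑(Omega j p)) ∧
    ∀ v : Set (Fin n → SignType), IsSection n j v →
      cubeMul x h '' ↑(Psi j p) ⊆ v →
      IsSection n j ((v \ cubeMul x h '' ↑(Psi j p)) ∪ cubeMul x h '' ↑(Omega j p)) := by
  obtain ⟨hdψ, huψ⟩ := psi_spec p j hj.le
  obtain ⟨hdω, huω⟩ := omega_spec p j hj.le
  have hcardE : ∀ S : Finset (Fin p), (S.image (emb x h)).card = S.card := fun S =>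
    Finset.card_image_of_injective _ (emb_injective x h)
  constructor
  · -- the parallel-set equality
    ext t
    simp only [Set.mem_image, Finset.mem_coe]
    constructor
    · rintro ⟨y, hy, rfl⟩
      obtain ⟨y', ⟨hy', hz'⟩, -⟩ := huω (zeroSet y) (hdψ y hy)
      exact ⟨y', hy', by rw [preimage_zero_eq, preimage_zero_eq,
        zeroSet_cubeMul, zeroSet_cubeMul, hz']⟩
    · rintro ⟨y, hy, rfl⟩
      obtain ⟨y', ⟨hy', hz'⟩, -⟩ := huψ (zeroSet y) (hdω y hy)
      exact ⟨y', hy', by rw [preimage_zero_eq, preimage_zero_eq,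
        zeroSet_cubeMul, zeroSet_cubeMul, hz']⟩
  · rintro v ⟨hvd, hvu⟩ hsub
    constructor
    · rintro z (⟨hz, -⟩ | ⟨y, hy, rfl⟩)
      · exact hvd z hz
      · rw [dim_eq_card_zeroSet, zeroSet_cubeMul, hcardE]
        exact hdω y hy
    · intro S hS
      by_cases hSZ : ∃ S₀ : Finset (Fin p), S₀.card = j ∧ S = S₀.image (emb x h)
      · obtain ⟨S₀, hS₀c, rfl⟩ := hSZ
        obtain ⟨yω, ⟨hyω, hyωz⟩, hyωu⟩ := huω S₀ hS₀c
        obtain ⟨yψ, ⟨hyψ, hyψz⟩, -⟩ := huψ S₀ hS₀c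
        have haA : cubeMul x h yψ ∈ cubeMul x h '' ↑(Psi j p) :=
          ⟨yψ, hyψ, rfl⟩
        have haz : zeroSet (cubeMul x h yψ) = S₀.image (emb x h) := by
          rw [zeroSet_cubeMul, hyψz]
        refine ⟨cubeMul x h yω, ⟨Or.inr ⟨yω, hyω, rfl⟩, by
          rw [zeroSet_cubeMul, hyωz]⟩, ?_⟩
        rintro z ⟨⟨hzv, hzA⟩ | ⟨y', hy', rfl⟩, hzz⟩
        · -- z ∈ v \ A : impossible, since the unique element of v in this class is in A
          exfalso
          obtain ⟨w, -, hwu⟩ := hvu _ hS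
          have h1 : z = w := hwu z ⟨hzv, hzz⟩
          have h2 : cubeMul x h yψ = w := hwu _ ⟨hsub haA, haz⟩
          exact hzA (h1 ▸ h2 ▸ haA)
        · -- z ∈ B
          have : zeroSet y' = S₀ := by
            apply Finset.image_injective (emb_injective x h)
            rw [← zeroSet_cubeMul, hzz]
          rw [hyωu y' ⟨hy', this⟩]
      · -- S is not in the image family
        obtain ⟨w, ⟨hwv, hwz⟩, hwu⟩ := hvu S hS
        have hwA : w ∉ cubeMul x h '' ↑(Psi j p) := by
          rintro ⟨y, hy, rfl⟩
          exact hSZ ⟨zeroSet y, hdψ y hy, by rw [← hwz, zeroSet_cubeMul]⟩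
        refine ⟨w, ⟨Or.inl ⟨hwv, hwA⟩, hwz⟩, ?_⟩
        rintro z ⟨⟨hzv, -⟩ | ⟨y', hy', rfl⟩, hzz⟩
        · exact hwu z ⟨hzv, hzz⟩
        · exact absurd ⟨zeroSet y', hdω y' hy', by rw [← hzz, zeroSet_cubeMul]⟩ hSZ
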